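/- arXiv:1710.08779 — 2 statements merged into one kernel-verified Lean document; each statement's English description precedes it below -/
import Mathlib

section
/- With K and P as in the exact block triangular preconditioning of the saddle-point matrix (P using the exact Schur complement S = B F⁻¹ Bᵀ + C), the matrix K P⁻¹ − I is nilpotent with (K P⁻¹ − I)² = 0; consequently every eigenvalue of K P⁻¹ equals 1. -/
/-!
Block elimination factors the saddle-point matrix as `K = L * P` with
`L = [[1, 0], [B F⁻¹, 1]]`: eliminating `B` below `F` turns `-C` into `-C - B F⁻¹ Bᵀ = -S`.
Hence `K P⁻¹ = L` is block unipotent, `(L - 1)² = 0`, and a matrix `a` with `a - 1` nilpotent has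
no eigenvalue other than `1`.
-/

open Matrix

namespace Matrix

variable {l m α : Type*} [Fintype l] [Fintype m] [DecidableEq l] [DecidableEq m]

theorem fromBlocks_eq_mul_fromBlocks_zero₂₁ [CommRing α] {A : Matrix l l α} (hA : IsUnit A)
    (B : Matrix l m α) (C : Matrix m l α) (D : Matrix m m α) :
    fromBlocks A B C D = fromBlocks 1 0 (C * A⁻¹) 1 * fromBlocks A B 0 (D - C * A⁻¹ * B) := by
  have hA' : IsUnit A.det := (isUnit_iff_isUnit_det A).mp hA
  rw [fromBlocks_multiply, nonsing_inv_mul_cancel_right _ _ hA']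
  simp [Matrix.mul_assoc]

theorem fromBlocks_one_zero_one_sub_one_sq [Ring α] (X : Matrix m l α) :
    (fromBlocks 1 0 X 1 - 1 : Matrix (l ⊕ m) (l ⊕ m) α) ^ 2 = 0 := by
  have hN : (fromBlocks 1 0 X 1 : Matrix (l ⊕ m) (l ⊕ m) α) = 1 + fromBlocks 0 0 X 0 := by
    rw [← fromBlocks_one, fromBlocks_add]
    simp
  rw [hN, add_sub_cancel_left, sq, fromBlocks_multiply]
  simp

end Matrix

theorem spectrum_subset_singleton_one_of_isNilpotent_sub_one {𝕜 A : Type*} [Field 𝕜] [Ring A]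
    [Algebra 𝕜 A] {a : A} (ha : IsNilpotent (a - 1)) : spectrum 𝕜 a ⊆ {1} := by
  intro μ hμ
  by_contra hμ1
  refine spectrum.mem_iff.mp hμ ?_
  have hunit : IsUnit (algebraMap 𝕜 A (μ - 1)) :=
    (sub_ne_zero.mpr hμ1).isUnit.map (algebraMap 𝕜 A)
  have hsplit : algebraMap 𝕜 A μ - a = algebraMap 𝕜 A (μ - 1) + -(a - 1) := by
    rw [map_sub, map_one]
    abel
  rw [hsplit]
  exact ha.neg.isUnit_add_left_of_commute hunit (Algebra.commutes _ _).symm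

theorem preconditioned_saddle_point_nilpotent {n m : ℕ}
    (F : Matrix (Fin n) (Fin n) ℝ) (B : Matrix (Fin m) (Fin n) ℝ)
    (C S : Matrix (Fin m) (Fin m) ℝ)
    (hF : IsUnit F) (hS : S = B * F⁻¹ * Bᵀ + C) (hSu : IsUnit S)
    (K P : Matrix (Fin n ⊕ Fin m) (Fin n ⊕ Fin m) ℝ)
    (hK : K = Matrix.fromBlocks F Bᵀ B (-C))
    (hP : P = Matrix.fromBlocks F Bᵀ 0 (-S)) :
    (K * P⁻¹ - 1) ^ 2 = 0 ∧ ∀ μ ∈ spectrum ℝ (K * P⁻¹), μ = 1 := by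
  have hKP : K = fromBlocks 1 0 (B * F⁻¹) 1 * P := by
    rw [hK, hP, fromBlocks_eq_mul_fromBlocks_zero₂₁ hF, hS, neg_add_rev, sub_eq_add_neg]
  have hPu : IsUnit P.det := by
    rw [← isUnit_iff_isUnit_det, hP, isUnit_fromBlocks_zero₂₁]
    exact ⟨hF, hSu.neg⟩
  have hsq : (K * P⁻¹ - 1) ^ 2 = 0 := by
    rw [hKP, mul_nonsing_inv_cancel_right _ _ hPu]
    exact fromBlocks_one_zero_one_sub_one_sq _
  exact ⟨hsq, fun μ hμ ↦
    spectrum_subset_singleton_one_of_isNilpotent_sub_one ⟨2, hsq⟩ hμ⟩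
end

section
/- For right preconditioned GMRES with the exact block triangular preconditioner P (using exact F and exact Schur complement S), the Krylov space satisfies: for any right-hand side b, the minimal polynomial of K P⁻¹ divides (λ−1)², so GMRES converges in at most 2 iterations. -/
open Matrix

theorem gmres_two_step_convergence {n m : ℕ}
    (F : Matrix (Fin n) (Fin n) ℝ) (B : Matrix (Fin m) (Fin n) ℝ)
    (C S : Matrix (Fin m) (Fin m) ℝ)
    (hF : IsUnit F) (hS : S = B * F⁻¹ * Bᵀ + C) (hSu : IsUnit S)
    (K P T : Matrix (Fin n ⊕ Fin m) (Fin n ⊕ Fin m) ℝ)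
    (hK : K = Matrix.fromBlocks F Bᵀ B (-C))
    (hP : P = Matrix.fromBlocks F Bᵀ 0 (-S))
    (hT : T = K * P⁻¹) :
    (T - 1) ^ 2 = 0 ∧
    ∀ b : (Fin n ⊕ Fin m) → ℝ,
      (T ^ 2) *ᵥ b - (2 : ℝ) • (T *ᵥ b) + b = 0 ∧
      Submodule.span ℝ (Set.range fun k : ℕ => (T ^ k) *ᵥ b) =
        Submodule.span ℝ {b, T *ᵥ b} := by
  have hFd : IsUnit F.det := (Matrix.isUnit_iff_isUnit_det F).mp hF
  have hSd : IsUnit S.det := (Matrix.isUnit_iff_isUnit_det S).mp hSu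
  have hFinv : F * F⁻¹ = 1 := Matrix.mul_nonsing_inv F hFd
  have hSinv : S * S⁻¹ = 1 := Matrix.mul_nonsing_inv S hSd
  set Q : Matrix (Fin n ⊕ Fin m) (Fin n ⊕ Fin m) ℝ :=
    Matrix.fromBlocks F⁻¹ (F⁻¹ * Bᵀ * S⁻¹) 0 (-S⁻¹) with hQ
  have e12 : F * (F⁻¹ * Bᵀ * S⁻¹) + Bᵀ * -S⁻¹ = 0 := by
    rw [← Matrix.mul_assoc, ← Matrix.mul_assoc, hFinv, Matrix.one_mul, Matrix.mul_neg,
      add_neg_cancel]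
  have hPQ : P * Q = 1 := by
    rw [hP, hQ, Matrix.fromBlocks_multiply, ← Matrix.fromBlocks_one]
    refine Matrix.fromBlocks_inj.mpr ⟨?_, ?_, ?_, ?_⟩
    · simp [hFinv]
    · exact e12
    · simp
    · simp [hSinv]
  have hPinv : P⁻¹ = Q := Matrix.inv_eq_right_inv hPQ
  have hTval : T = Matrix.fromBlocks 1 0 (B * F⁻¹) 1 := by
    rw [hT, hK, hPinv, hQ, Matrix.fromBlocks_multiply]
    refine Matrix.fromBlocks_inj.mpr ⟨?_, ?_, ?_, ?_⟩
    · simp [hFinv]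
    · exact e12
    · simp
    · rw [neg_mul_neg, ← Matrix.mul_assoc, ← Matrix.mul_assoc, ← Matrix.add_mul, ← hS, hSinv]
  have hN : (T - 1) ^ 2 = 0 := by
    have hsub : T - 1 = Matrix.fromBlocks 0 0 (B * F⁻¹) 0 := by
      rw [hTval, ← Matrix.fromBlocks_one, sub_eq_add_neg, Matrix.fromBlocks_neg,
        Matrix.fromBlocks_add]
      simp
    rw [hsub, pow_two, Matrix.fromBlocks_multiply]
    simp
  have h2 : T ^ 2 = 2 * T - 1 := by
    have h : T ^ 2 - (2 * T - 1) = 0 := by rw [← hN]; noncomm_ring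
    exact sub_eq_zero.mp h
  refine ⟨hN, fun b => ?_⟩
  have hrec : ∀ k : ℕ, T ^ (k + 2) = 2 * T ^ (k + 1) - T ^ k := by
    intro k
    rw [pow_add, h2, pow_succ]
    noncomm_ring
  constructor
  · rw [h2, Matrix.sub_mulVec, two_mul, Matrix.add_mulVec, Matrix.one_mulVec, two_smul]
    abel
  · have hmem : ∀ k : ℕ, (T ^ k) *ᵥ b ∈ Submodule.span ℝ ({b, T *ᵥ b} : Set _) := by
      intro k
      induction k using Nat.twoStepInduction with
      | zero => simpa using Submodule.subset_span (by simp : b ∈ ({b, T *ᵥ b} : Set _))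
      | one => simpa using Submodule.subset_span (by simp : T *ᵥ b ∈ ({b, T *ᵥ b} : Set _))
      | more k ih1 ih2 =>
        rw [hrec k, Matrix.sub_mulVec, two_mul, Matrix.add_mulVec]
        exact Submodule.sub_mem _ (Submodule.add_mem _ ih2 ih2) ih1
    apply le_antisymm
    · rw [Submodule.span_le]
      rintro x ⟨k, rfl⟩
      exact hmem k
    · rw [Submodule.span_le]
      rintro x hx
      rcases hx with rfl | rfl
      · exact Submodule.subset_span ⟨0, by simp⟩
      · exact Submodule.subset_span ⟨1, by simp⟩
end
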